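/- Let I be a nontrivial interval of ℝ and f : I → ℝ a C^2 function such that D^2 f is piecewise monotone. Then there exists a closed discrete set E ⊆ I which witnesses the piecewise monotonicity of f, Df, and D^2 f simultaneously, and which has at most one point on each platform of D^2 f. -/

import Mathlib

open Set MeasureTheory

/-- `K` is closed and discrete in `I`: every point of `I` has a punctured
neighborhood missing `K`. -/
def ClosedDiscreteIn (K I : Set ℝ) : Prop :=
  K ⊆ I ∧ ∀ x ∈ I, ∃ ε > 0, ∀ y ∈ K, |y - x| < ε → y = x

/-- `f` is (non-strictly) monotone on `S`. -/
def MonoOn (f : ℝ → ℝ) (S : Set ℝ) : Prop :=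
  MonotoneOn f S ∨ AntitoneOn f S

/-- `K` witnesses the piecewise monotonicity of `f` on `I`. -/
def Witnesses (f : ℝ → ℝ) (I K : Set ℝ) : Prop :=
  ClosedDiscreteIn K I ∧
    ∀ x ∈ I \ K, MonoOn f (connectedComponentIn (I \ K) x)

/-- `f` is piecewise monotone on `I`. -/
def PiecewiseMonotoneOn (f : ℝ → ℝ) (I : Set ℝ) : Prop :=
  ∃ K, Witnesses f I K

/-- The platform of `f` containing `p`: the connected component of the fiber
of `f` (within `I`) containing `p`. -/
def Platform (f : ℝ → ℝ) (I : Set ℝ) (p : ℝ) : Set ℝ :=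
  connectedComponentIn {x ∈ I | f x = f p} p

/-- `P` is a platform of `f` on `I`. -/
def IsPlatform (f : ℝ → ℝ) (I P : Set ℝ) : Prop :=
  ∃ p ∈ I, P = Platform f I p

/-- `P` is a turning platform of `f` on `I`. -/
def IsTurningPlatform (f : ℝ → ℝ) (I P : Set ℝ) : Prop :=
  IsPlatform f I P ∧
  ∃ a b c ε, a ≤ b ∧ P = Icc a b ∧ (∀ x ∈ P, f x = c) ∧ 0 < ε ∧
    Ioo (a - ε) (b + ε) ⊆ I ∧
    ((∀ x ∈ Ioo (a - ε) (b + ε) \ P, c < f x) ∨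
     (∀ x ∈ Ioo (a - ε) (b + ε) \ P, f x < c))

/-- `x` is a turning point of `f` on `I`. -/
def IsTurningPoint (f : ℝ → ℝ) (I : Set ℝ) (x : ℝ) : Prop :=
  ∃ P, IsTurningPlatform f I P ∧ x ∈ P

/-! Refine a witness `K` of `D²f` twice: adding to each component of `I \ K` one zero of `D²f`
(if there is one) makes `D²f` of constant sign there, and then adding one zero of `Df` per
component makes `Df` of constant sign too; on such pieces `D²f`, `Df` and `f` are all monotone.
Then keep only one point per platform of `D²f`, a zero of `Df` when the platform has one. Each
discarded point `e` lies on the platform of a kept point outside the component of `e`, so on one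
side of `e` the function `D²f` is constant, which forces `Df` to be constant or injective there;
either way `Df` keeps its sign on that side. This lets the pieces on both sides of `e` be glued,
so the coarser partition still witnesses the monotonicity of all three functions. -/

open Filter Topology

theorem closedDiscreteIn_of_finite_inter_ball {K I : Set ℝ} (hKI : K ⊆ I)
    (h : ∀ x ∈ I, ∃ ε > 0, (K ∩ Metric.ball x ε).Finite) : ClosedDiscreteIn K I := by
  refine ⟨hKI, fun x hx => ?_⟩
  obtain ⟨ε, hε, hfin⟩ := h x hx
  obtain ⟨δ, hδ, hball⟩ := Metric.isOpen_iff.1 (hfin.sdiff (t := {x})).isClosed.isOpen_compl x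
    fun hx' => hx'.2 rfl
  refine ⟨min ε δ, lt_min hε hδ, fun y hy hyx => by_contra fun hne => ?_⟩
  rw [← Real.dist_eq] at hyx
  exact hball (hyx.trans_le (min_le_right _ _))
    ⟨⟨hy, hyx.trans_le (min_le_left _ _)⟩, hne⟩

theorem ClosedDiscreteIn.finite_inter_Icc {K I : Set ℝ} (hK : ClosedDiscreteIn K I) {a b : ℝ}
    (hab : Icc a b ⊆ I) : (K ∩ Icc a b).Finite := by
  choose! ε hε hKε using hK.2
  obtain ⟨t, ht, hcover⟩ := isCompact_Icc.elim_nhds_subcover (fun x => Metric.ball x (ε x))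
    fun x hx => Metric.ball_mem_nhds x (hε x (hab hx))
  refine t.finite_toSet.subset fun y ⟨hyK, hy⟩ => ?_
  obtain ⟨z, hz, hyz⟩ := mem_iUnion₂.1 (hcover hy)
  rw [Metric.mem_ball, Real.dist_eq] at hyz
  rwa [hKε z (hab (ht z hz)) y hyK hyz]

theorem connectedComponentIn_image_subsingleton {α : Type*} [TopologicalSpace α] {F T : Set α}
    (hT : IsPreconnected T) (hTF : T ⊆ F) : (connectedComponentIn F '' T).Subsingleton := by
  rintro _ ⟨a, ha, rfl⟩ _ ⟨b, hb, rfl⟩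
  exact connectedComponentIn_eq (hT.subset_connectedComponentIn ha hTF hb)

-- A small punctured neighborhood of a point of `I` meets at most two components of `I \ K`.
theorem ClosedDiscreteIn.union_componentwise {K I : Set ℝ} (hI : I.OrdConnected)
    (hK : ClosedDiscreteIn K I) (A : Set ℝ → Set ℝ) (hA : ∀ S, (A S).Finite) :
    ClosedDiscreteIn (K ∪ {w ∈ I \ K | w ∈ A (connectedComponentIn (I \ K) w)}) I := by
  refine closedDiscreteIn_of_finite_inter_ball (union_subset hK.1 fun w hw => hw.1.1)
    fun x hx => ?_
  obtain ⟨ε, hε, hKε⟩ := hK.2 x hx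
  have hnear : ∀ w ∈ Metric.ball x ε ∩ I, w ≠ x → w ∈ I \ K := fun w hw hwx =>
    ⟨hw.2, fun hwK => hwx (hKε w hwK (by simpa [Real.dist_eq] using hw.1))⟩
  set L := Ioo (x - ε) x ∩ I
  set R := Ioo x (x + ε) ∩ I
  have hL : L ⊆ I \ K := fun w hw =>
    hnear w ⟨Real.ball_eq_Ioo x ε ▸ ⟨hw.1.1, by linarith [hw.1.2]⟩, hw.2⟩ hw.1.2.ne
  have hR : R ⊆ I \ K := fun w hw =>
    hnear w ⟨Real.ball_eq_Ioo x ε ▸ ⟨by linarith [hw.1.1], hw.1.2⟩, hw.2⟩ hw.1.1.ne'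
  have hLs := connectedComponentIn_image_subsingleton (ordConnected_Ioo.inter hI).isPreconnected hL
  have hRs := connectedComponentIn_image_subsingleton (ordConnected_Ioo.inter hI).isPreconnected hR
  refine ⟨ε, hε, ((finite_singleton x).union ((hLs.finite.biUnion fun S _ => hA S).union
    (hRs.finite.biUnion fun S _ => hA S))).subset ?_⟩
  rintro y ⟨hy | ⟨hyIK, hyA⟩, hyx⟩
  · exact Or.inl (hKε y hy (by simpa [Real.dist_eq] using hyx))
  rw [Real.ball_eq_Ioo] at hyx
  rcases lt_trichotomy y x with h | rfl | h
  · exact Or.inr (Or.inl (mem_biUnion (mem_image_of_mem _ ⟨⟨hyx.1, h⟩, hyIK.1⟩) hyA))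
  · exact Or.inl rfl
  · exact Or.inr (Or.inr (mem_biUnion (mem_image_of_mem _ ⟨⟨h, hyx.2⟩, hyIK.1⟩) hyA))

section Sign

def NoSignChangeOn (g : ℝ → ℝ) (S : Set ℝ) : Prop :=
  (∀ x ∈ S, 0 ≤ g x) ∨ ∀ x ∈ S, g x ≤ 0

variable {g : ℝ → ℝ} {S T : Set ℝ}

theorem NoSignChangeOn.mono (h : NoSignChangeOn g T) (hST : S ⊆ T) : NoSignChangeOn g S :=
  h.imp (fun h x hx => h x (hST hx)) fun h x hx => h x (hST hx)

theorem MonoOn.mono (h : MonoOn g T) (hST : S ⊆ T) : MonoOn g S :=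
  h.imp (·.mono hST) (·.mono hST)

theorem IsPreconnected.exists_zero_of_not_noSignChangeOn (hS : IsPreconnected S)
    (hg : ContinuousOn g S) (h : ¬NoSignChangeOn g S) : ∃ w ∈ S, g w = 0 := by
  simp only [NoSignChangeOn, not_or, not_forall, not_le, exists_prop] at h
  obtain ⟨⟨s, hs, hgs⟩, t, ht, hgt⟩ := h
  exact hS.intermediate_value hs ht hg ⟨hgs.le, hgt.le⟩

theorem IsPreconnected.sign_eq_of_forall_ne_zero (hS : IsPreconnected S) (hg : ContinuousOn g S)
    (h0 : ∀ x ∈ S, g x ≠ 0) {s t : ℝ} (hs : s ∈ S) (ht : t ∈ S) :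
    SignType.sign (g s) = SignType.sign (g t) := by
  have hsign : NoSignChangeOn g S := by_contra fun hn => by
    obtain ⟨w, hw, hw0⟩ := hS.exists_zero_of_not_noSignChangeOn hg hn
    exact h0 w hw hw0
  rcases hsign with h | h
  · rw [sign_pos ((h s hs).lt_of_ne' (h0 s hs)), sign_pos ((h t ht).lt_of_ne' (h0 t ht))]
  · rw [sign_neg ((h s hs).lt_of_ne (h0 s hs)), sign_neg ((h t ht).lt_of_ne (h0 t ht))]

theorem Set.OrdConnected.forall_lt_or_forall_gt_of_notMem {α : Type*} [LinearOrder α]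
    {C : Set α} (hC : C.OrdConnected) {w : α} (hw : w ∉ C) :
    (∀ x ∈ C, x < w) ∨ ∀ x ∈ C, w < x := by
  by_contra! h
  obtain ⟨⟨a, ha, haw⟩, b, hb, hbw⟩ := h
  exact hw (hC.out hb ha ⟨hbw, haw⟩)

theorem MonoOn.noSignChangeOn_of_eq_zero (hg : MonoOn g S) {C : Set ℝ} (hCS : C ⊆ S)
    (hC : C.OrdConnected) {w : ℝ} (hwS : w ∈ S) (hwC : w ∉ C) (hw : g w = 0) :
    NoSignChangeOn g C := by
  rcases hC.forall_lt_or_forall_gt_of_notMem hwC with hlt | hgt <;> rcases hg with hg | hg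
  · exact Or.inr fun x hx => (hg (hCS hx) hwS (hlt x hx).le).trans_eq hw
  · exact Or.inl fun x hx => hw.symm.trans_le (hg (hCS hx) hwS (hlt x hx).le)
  · exact Or.inl fun x hx => hw.symm.trans_le (hg hwS (hCS hx) (hgt x hx).le)
  · exact Or.inr fun x hx => (hg hwS (hCS hx) (hgt x hx).le).trans_eq hw

theorem MonotoneOn.closure_of_continuousOn {α β : Type*} [LinearOrder α] [TopologicalSpace α]
    [OrderTopology α] [LinearOrder β] [TopologicalSpace β] [OrderClosedTopology β] {f : α → β}
    {s : Set α} (hf : MonotoneOn f s) (hc : ContinuousOn f (closure s)) :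
    MonotoneOn f (closure s) := by
  intro a ha b hb hab
  rcases hab.eq_or_lt with rfl | hlt
  · rfl
  have := mem_closure_iff_nhdsWithin_neBot.1 ha
  have := mem_closure_iff_nhdsWithin_neBot.1 hb
  have hfst : Tendsto Prod.fst (𝓝[s] a ×ˢ 𝓝[s] b) (𝓝 a) := tendsto_fst.mono_right nhdsWithin_le_nhds
  have hsnd : Tendsto Prod.snd (𝓝[s] a ×ˢ 𝓝[s] b) (𝓝 b) := tendsto_snd.mono_right nhdsWithin_le_nhds
  refine le_of_tendsto_of_tendsto (((hc a ha).mono subset_closure).tendsto.comp tendsto_fst)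
    (((hc b hb).mono subset_closure).tendsto.comp tendsto_snd) ?_
  filter_upwards [hfst.eventually_lt hsnd hlt, tendsto_fst self_mem_nhdsWithin,
    tendsto_snd self_mem_nhdsWithin] with p hp h₁ h₂
  exact hf h₁ h₂ hp.le

theorem MonoOn.closure_of_continuousOn (h : MonoOn g S) (hc : ContinuousOn g (closure S)) :
    MonoOn g (closure S) :=
  h.imp (·.closure_of_continuousOn hc) fun h =>
    h.dual_right.closure_of_continuousOn (continuous_toDual.comp_continuousOn hc)

theorem NoSignChangeOn.closure_of_continuousOn (h : NoSignChangeOn g S)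
    (hc : ContinuousOn g (closure S)) : NoSignChangeOn g (closure S) :=
  h.imp (fun h x hx => by
      simpa using MapsTo.closure_of_continuousOn (t := Ici 0) (fun y hy => h y hy) hc hx)
    fun h x hx => by
      simpa using MapsTo.closure_of_continuousOn (t := Iic 0) (fun y hy => h y hy) hc hx

theorem MonoOn.Icc_union_Icc_of_const {x e z : ℝ} (hxe : x ≤ e) (hez : e ≤ z)
    (h₁ : MonoOn g (Icc x e)) (h₂ : MonoOn g (Icc e z))
    (hc : (∀ t ∈ Icc x e, g t = g e) ∨ ∀ t ∈ Icc e z, g t = g e) : MonoOn g (Icc x z) := by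
  rw [← Icc_union_Icc_eq_Icc hxe hez]
  have hG := isGreatest_Icc hxe
  have hL := isLeast_Icc hez
  rcases hc with hc | hc
  · have hm : MonotoneOn g (Icc x e) := monotoneOn_const.congr fun t ht => (hc t ht).symm
    have ha : AntitoneOn g (Icc x e) := antitoneOn_const.congr fun t ht => (hc t ht).symm
    exact h₂.imp (hm.union_right · hG hL) (ha.union_right · hG hL)
  · have hm : MonotoneOn g (Icc e z) := monotoneOn_const.congr fun t ht => (hc t ht).symm
    have ha : AntitoneOn g (Icc e z) := antitoneOn_const.congr fun t ht => (hc t ht).symm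
    exact h₁.imp (·.union_right hm hG hL) (·.union_right ha hG hL)

theorem NoSignChangeOn.union_of_sign_eq (h : NoSignChangeOn g T) {e : ℝ} (he : e ∈ T)
    (hS : ∀ x ∈ S, SignType.sign (g x) = SignType.sign (g e)) : NoSignChangeOn g (S ∪ T) := by
  refine h.imp (fun h x hx => ?_) fun h x hx => ?_
  · rcases hx with hx | hx
    · rw [← sign_nonneg_iff, hS x hx, sign_nonneg_iff]
      exact h e he
    · exact h x hx
  · rcases hx with hx | hx
    · rw [← sign_nonpos_iff, hS x hx, sign_nonpos_iff]
      exact h e he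
    · exact h x hx

theorem monoOn_of_forall_Icc {C : Set ℝ}
    (h : ∀ x ∈ C, ∀ z ∈ C, x < z → MonoOn g (Icc x z)) : MonoOn g C := by
  by_contra hg
  simp only [MonoOn, MonotoneOn, AntitoneOn, not_or, not_forall, not_le, exists_prop] at hg
  obtain ⟨⟨a, ha, b, hb, hab, hgab⟩, c, hc, d, hd, hcd, hgcd⟩ := hg
  have hmin : min a c ∈ C := by rcases min_choice a c with h | h <;> rw [h] <;> assumption
  have hmax : max b d ∈ C := by rcases max_choice b d with h | h <;> rw [h] <;> assumption
  have hlt : min a c < max b d :=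
    (min_le_left a c).trans_lt ((hab.lt_of_ne (by rintro rfl; exact hgab.false)).trans_le
      (le_max_left b d))
  have hmem : ∀ y, (a ≤ y ∨ c ≤ y) → (y ≤ b ∨ y ≤ d) → y ∈ Icc (min a c) (max b d) :=
    fun y h₁ h₂ => ⟨min_le_iff.2 h₁, le_max_iff.2 h₂⟩
  rcases h _ hmin _ hmax hlt with hm | hm
  · exact (hm (hmem a (.inl le_rfl) (.inl hab)) (hmem b (.inl hab) (.inl le_rfl)) hab).not_gt hgab
  · exact (hm (hmem c (.inr le_rfl) (.inr hcd)) (hmem d (.inr hcd) (.inr le_rfl)) hcd).not_gt hgcd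

theorem noSignChangeOn_of_forall_Icc {C : Set ℝ}
    (h : ∀ x ∈ C, ∀ z ∈ C, x < z → NoSignChangeOn g (Icc x z)) : NoSignChangeOn g C := by
  by_contra hg
  simp only [NoSignChangeOn, not_or, not_forall, not_le, exists_prop] at hg
  obtain ⟨⟨s, hs, hgs⟩, t, ht, hgt⟩ := hg
  rcases lt_or_gt_of_ne (show s ≠ t by rintro rfl; linarith) with hst | hts
  · rcases h s hs t ht hst with h | h
    · linarith [h s (left_mem_Icc.2 hst.le)]
    · linarith [h t (right_mem_Icc.2 hst.le)]
  · rcases h t ht s hs hts with h | h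
    · linarith [h s (right_mem_Icc.2 hts.le)]
    · linarith [h t (left_mem_Icc.2 hts.le)]

theorem Ioo_induction_of_finite {D : Set ℝ} {P : ℝ → ℝ → Prop}
    (base : ∀ x z, x < z → Ioo x z ∩ D = ∅ → P x z)
    (glue : ∀ x e z, e ∈ Ioo x z → e ∈ D → P x e → P e z → P x z)
    {x z : ℝ} (hxz : x < z) (hfin : (Ioo x z ∩ D).Finite) : P x z := by
  induction hn : (Ioo x z ∩ D).ncard using Nat.strong_induction_on generalizing x z with
  | _ n ih =>
  rcases (Ioo x z ∩ D).eq_empty_or_nonempty with h0 | ⟨e, he, heD⟩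
  · exact base x z hxz h0
  have hl : Ioo x e ∩ D ⊂ Ioo x z ∩ D :=
    ⟨fun t ht => ⟨⟨ht.1.1, ht.1.2.trans he.2⟩, ht.2⟩, fun hs => (hs ⟨he, heD⟩).1.2.false⟩
  have hr : Ioo e z ∩ D ⊂ Ioo x z ∩ D :=
    ⟨fun t ht => ⟨⟨he.1.trans ht.1.1, ht.1.2⟩, ht.2⟩, fun hs => (hs ⟨he, heD⟩).1.1.false⟩
  exact glue x e z he heD
    (ih _ (hn ▸ ncard_lt_ncard hl hfin) he.1 (hfin.subset hl.subset) rfl)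
    (ih _ (hn ▸ ncard_lt_ncard hr hfin) he.2 (hfin.subset hr.subset) rfl)

end Sign

section Deriv

variable {I S : Set ℝ} {F G : ℝ → ℝ}

theorem ContDiffOn.hasDerivWithinAt_iteratedDerivWithin {𝕜 E : Type*}
    [NontriviallyNormedField 𝕜] [NormedAddCommGroup E] [NormedSpace 𝕜 E] {f : 𝕜 → E}
    {s : Set 𝕜} {n : WithTop ℕ∞} {m : ℕ} (hf : ContDiffOn 𝕜 n f s) (hmn : (m : WithTop ℕ∞) < n)
    (hs : UniqueDiffOn 𝕜 s) {t : 𝕜} (ht : t ∈ s) :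
    HasDerivWithinAt (iteratedDerivWithin m f s) (iteratedDerivWithin (m + 1) f s t) s t := by
  rw [iteratedDerivWithin_succ]
  exact (hf.differentiableOn_iteratedDerivWithin hmn hs t ht).hasDerivWithinAt

theorem hasDerivWithinAt_interior_of_subset (hd : ∀ t ∈ I, HasDerivWithinAt F (G t) I t)
    (hS : S ⊆ I) : ∀ t ∈ interior S, HasDerivWithinAt F (G t) (interior S) t := fun t ht =>
  ((hd t (hS (interior_subset ht))).hasDerivAt
    (mem_interior_iff_mem_nhds.1 (interior_mono hS ht))).hasDerivWithinAt

theorem NoSignChangeOn.monoOn_of_hasDerivWithinAt (hd : ∀ t ∈ I, HasDerivWithinAt F (G t) I t)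
    (hS : S ⊆ I) (hSc : S.OrdConnected) (h : NoSignChangeOn G S) : MonoOn F S :=
  have hc := (HasDerivWithinAt.continuousOn hd).mono hS
  h.imp (fun h => monotoneOn_of_hasDerivWithinAt_nonneg hSc.convex hc
      (hasDerivWithinAt_interior_of_subset hd hS) fun t ht => h t (interior_subset ht))
    fun h => antitoneOn_of_hasDerivWithinAt_nonpos hSc.convex hc
      (hasDerivWithinAt_interior_of_subset hd hS) fun t ht => h t (interior_subset ht)

theorem eq_of_hasDerivWithinAt_eq_zero (hd : ∀ t ∈ I, HasDerivWithinAt F (G t) I t) (hS : S ⊆ I)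
    (hSc : S.OrdConnected) (hG : ∀ t ∈ S, G t = 0) {s t : ℝ} (hs : s ∈ S) (ht : t ∈ S) :
    F s = F t := by
  have hc := (HasDerivWithinAt.continuousOn hd).mono hS
  have hi := hasDerivWithinAt_interior_of_subset hd hS
  have hm := monotoneOn_of_hasDerivWithinAt_nonneg hSc.convex hc hi
    fun t ht => (hG t (interior_subset ht)).ge
  have ha := antitoneOn_of_hasDerivWithinAt_nonpos hSc.convex hc hi
    fun t ht => (hG t (interior_subset ht)).le
  rcases le_total s t with hst | hts
  · exact le_antisymm (hm hs ht hst) (ha hs ht hst)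
  · exact le_antisymm (ha ht hs hts) (hm ht hs hts)

theorem injOn_of_hasDerivWithinAt_const (hd : ∀ t ∈ I, HasDerivWithinAt F (G t) I t)
    (hS : S ⊆ I) (hSc : S.OrdConnected) {c : ℝ} (hc0 : c ≠ 0) (hG : ∀ t ∈ S, G t = c) :
    InjOn F S := by
  have hc := (HasDerivWithinAt.continuousOn hd).mono hS
  have hi := hasDerivWithinAt_interior_of_subset hd hS
  rcases hc0.lt_or_gt with hneg | hpos
  · exact (strictAntiOn_of_hasDerivWithinAt_neg hSc.convex hc hi
      fun t ht => (hG t (interior_subset ht)).trans_lt hneg).injOn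
  · exact (strictMonoOn_of_hasDerivWithinAt_pos hSc.convex hc hi
      fun t ht => hpos.trans_eq (hG t (interior_subset ht)).symm).injOn

end Deriv

theorem Witnesses.exists_noSignChangeOn {g : ℝ → ℝ} {I K : Set ℝ} (hI : I.OrdConnected)
    (hK : Witnesses g I K) (hg : ContinuousOn g I) :
    ∃ K', K ⊆ K' ∧ Witnesses g I K' ∧
      ∀ x ∈ I \ K', NoSignChangeOn g (connectedComponentIn (I \ K') x) := by
  set pick : Set ℝ → ℝ := fun S => Classical.epsilon fun w => w ∈ S ∧ g w = 0
  set K' := K ∪ {w ∈ I \ K | w ∈ ({pick (connectedComponentIn (I \ K) w)} : Set ℝ)}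
  have hKK' : K ⊆ K' := subset_union_left
  have hxK : ∀ x ∈ I \ K', x ∈ I \ K := fun x hx => ⟨hx.1, fun h => hx.2 (hKK' h)⟩
  have hsub : ∀ x, connectedComponentIn (I \ K') x ⊆ connectedComponentIn (I \ K) x :=
    fun x => connectedComponentIn_mono x (sdiff_subset_sdiff_right hKK')
  refine ⟨K', hKK', ⟨hK.1.union_componentwise hI _ fun _ => finite_singleton _,
    fun x hx => (hK.2 x (hxK x hx)).mono (hsub x)⟩, fun x hx => by_contra fun hC => ?_⟩
  have hCI : connectedComponentIn (I \ K') x ⊆ I :=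
    (connectedComponentIn_subset _ _).trans sdiff_subset
  obtain ⟨w, hwC, hw0⟩ :=
    isPreconnected_connectedComponentIn.exists_zero_of_not_noSignChangeOn (hg.mono hCI) hC
  set S := connectedComponentIn (I \ K) x
  obtain ⟨hpS, hp0⟩ : pick S ∈ S ∧ g (pick S) = 0 :=
    Classical.epsilon_spec (p := fun w => w ∈ S ∧ g w = 0) ⟨w, hsub x hwC, hw0⟩
  have hpK' : pick S ∈ K' :=
    Or.inr ⟨connectedComponentIn_subset _ _ hpS, by rw [← connectedComponentIn_eq hpS]; rfl⟩
  exact hC ((hK.2 x (hxK x hx)).noSignChangeOn_of_eq_zero (hsub x)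
    isPreconnected_connectedComponentIn.ordConnected hpS
    (fun h => (connectedComponentIn_subset _ _ h).2 hpK') hp0)

section Platform

variable {g h : ℝ → ℝ} {I : Set ℝ} {p q : ℝ}

theorem self_mem_platform (hp : p ∈ I) : p ∈ Platform g I p :=
  mem_connectedComponentIn ⟨hp, rfl⟩

theorem platform_subset : Platform g I p ⊆ {x ∈ I | g x = g p} :=
  connectedComponentIn_subset _ _

theorem ordConnected_platform : (Platform g I p).OrdConnected :=
  isPreconnected_connectedComponentIn.ordConnected

theorem platform_eq_of_mem (hq : q ∈ Platform g I p) : Platform g I q = Platform g I p := by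
  have hfib : {x ∈ I | g x = g q} = {x ∈ I | g x = g p} := by
    rw [(platform_subset hq).2]
  rw [Platform, hfib]
  exact (connectedComponentIn_eq hq).symm

noncomputable def platformRep (g : ℝ → ℝ) (P : Set ℝ) : ℝ :=
  Classical.epsilon fun y => y ∈ P ∧ (g y = 0 ∨ ∀ z ∈ P, g z ≠ 0)

theorem platformRep_spec {P : Set ℝ} (hP : P.Nonempty) :
    platformRep g P ∈ P ∧ ∀ z ∈ P, g z = 0 → g (platformRep g P) = 0 := by
  have hex : ∃ y, y ∈ P ∧ (g y = 0 ∨ ∀ z ∈ P, g z ≠ 0) := by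
    by_cases h0 : ∃ z ∈ P, g z = 0
    · obtain ⟨z, hz, hz0⟩ := h0
      exact ⟨z, hz, .inl hz0⟩
    · push Not at h0
      exact ⟨hP.some, hP.some_mem, .inr h0⟩
  obtain ⟨hmem, hzero⟩ := Classical.epsilon_spec hex
  exact ⟨hmem, fun z hz hz0 => hzero.resolve_right fun h => h z hz hz0⟩

theorem platformRep_mem_platform (hp : p ∈ I) : platformRep g (Platform h I p) ∈ Platform h I p :=
  (platformRep_spec ⟨p, self_mem_platform hp⟩).1

def platformReps (g h : ℝ → ℝ) (I E : Set ℝ) : Set ℝ :=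
  (fun e => platformRep g (Platform h I e)) '' E

theorem eq_platformRep_of_mem_platformReps {E : Set ℝ} (hE : E ⊆ I) {y : ℝ}
    (hy : y ∈ platformReps g h I E) (hyp : y ∈ Platform h I p) :
    y = platformRep g (Platform h I p) := by
  obtain ⟨e, he, rfl⟩ := hy
  rw [← platform_eq_of_mem hyp, platform_eq_of_mem (platformRep_mem_platform (hE he))]

theorem ClosedDiscreteIn.platformReps {E : Set ℝ} (hE : ClosedDiscreteIn E I) :
    ClosedDiscreteIn (platformReps g h I E) I := by
  refine closedDiscreteIn_of_finite_inter_ball ?_ fun x hx => ?_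
  · rintro _ ⟨e, he, rfl⟩
    exact (platform_subset (platformRep_mem_platform (hE.1 he))).1
  obtain ⟨ε, hε, hEε⟩ := hE.2 x hx
  set rep := fun q => platformRep g (Platform h I q)
  refine ⟨ε / 2, half_pos hε,
    (((finite_singleton (rep x)).insert (rep (x + ε / 2))).insert (rep (x - ε / 2))).subset ?_⟩
  rintro _ ⟨⟨e, he, rfl⟩, hy⟩
  rcases eq_or_ne e x with rfl | hex
  · exact .inr (.inr rfl)
  have hfar : ε ≤ |e - x| := not_lt.1 fun h => hex (hEε e he h)
  rw [Metric.mem_ball, Real.dist_eq, abs_lt] at hy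
  have hseg := ordConnected_platform.uIcc_subset (self_mem_platform (hE.1 he))
    (platformRep_mem_platform (g := g) (h := h) (hE.1 he))
  -- the platform of `e` reaches from `e` to within `ε / 2` of `x`, so it contains `x ± ε / 2`
  rcases le_total e x with hxe | hxe
  · rw [abs_of_nonpos (by linarith)] at hfar
    have hm := hseg (mem_uIcc.2 (.inl ⟨by linarith, by linarith⟩) : x - ε / 2 ∈ _)
    simp [rep, ← platform_eq_of_mem hm]
  · rw [abs_of_nonneg (by linarith)] at hfar
    have hm := hseg (mem_uIcc.2 (.inr ⟨by linarith, by linarith⟩) : x + ε / 2 ∈ _)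
    simp [rep, ← platform_eq_of_mem hm]

end Platform

section Tame

def IsTameOn (f' f'' : ℝ → ℝ) (S : Set ℝ) : Prop :=
  MonoOn f'' S ∧ NoSignChangeOn f'' S ∧ NoSignChangeOn f' S

variable {f f' f'' : ℝ → ℝ} {I S : Set ℝ}

theorem IsTameOn.mono {T : Set ℝ} (h : IsTameOn f' f'' T) (hST : S ⊆ T) : IsTameOn f' f'' S :=
  ⟨h.1.mono hST, h.2.1.mono hST, h.2.2.mono hST⟩

theorem IsTameOn.closure_of_continuousOn (h : IsTameOn f' f'' S)
    (hc' : ContinuousOn f' (closure S)) (hc'' : ContinuousOn f'' (closure S)) :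
    IsTameOn f' f'' (closure S) :=
  ⟨h.1.closure_of_continuousOn hc'', h.2.1.closure_of_continuousOn hc'',
    h.2.2.closure_of_continuousOn hc'⟩

theorem IsTameOn.Icc_union_Icc {x e z : ℝ} (hxe : x ≤ e) (hez : e ≤ z)
    (h₁ : IsTameOn f' f'' (Icc x e)) (h₂ : IsTameOn f' f'' (Icc e z))
    (hflat : (∀ t ∈ Icc x e, f'' t = f'' e ∧ SignType.sign (f' t) = SignType.sign (f' e)) ∨
      ∀ t ∈ Icc e z, f'' t = f'' e ∧ SignType.sign (f' t) = SignType.sign (f' e)) :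
    IsTameOn f' f'' (Icc x z) := by
  refine ⟨h₁.1.Icc_union_Icc_of_const hxe hez h₂.1
    (hflat.imp (fun h t ht => (h t ht).1) fun h t ht => (h t ht).1), ?_⟩
  rw [← Icc_union_Icc_eq_Icc hxe hez]
  rcases hflat with h | h
  · exact ⟨h₂.2.1.union_of_sign_eq (left_mem_Icc.2 hez) fun t ht => by rw [(h t ht).1],
      h₂.2.2.union_of_sign_eq (left_mem_Icc.2 hez) fun t ht => (h t ht).2⟩
  · rw [union_comm]
    exact ⟨h₁.2.1.union_of_sign_eq (right_mem_Icc.2 hxe) fun t ht => by rw [(h t ht).1],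
      h₁.2.2.union_of_sign_eq (right_mem_Icc.2 hxe) fun t ht => (h t ht).2⟩

theorem isTameOn_of_forall_Icc (h : ∀ x ∈ S, ∀ z ∈ S, x < z → IsTameOn f' f'' (Icc x z)) :
    IsTameOn f' f'' S :=
  ⟨monoOn_of_forall_Icc fun x hx z hz hxz => (h x hx z hz hxz).1,
    noSignChangeOn_of_forall_Icc fun x hx z hz hxz => (h x hx z hz hxz).2.1,
    noSignChangeOn_of_forall_Icc fun x hx z hz hxz => (h x hx z hz hxz).2.2⟩

theorem IsTameOn.monoOn (hf : ∀ t ∈ I, HasDerivWithinAt f (f' t) I t)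
    (hf' : ∀ t ∈ I, HasDerivWithinAt f' (f'' t) I t) (hSI : S ⊆ I) (hS : S.OrdConnected)
    (h : IsTameOn f' f'' S) : MonoOn f S ∧ MonoOn f' S ∧ MonoOn f'' S :=
  ⟨h.2.2.monoOn_of_hasDerivWithinAt hf hSI hS, h.2.1.monoOn_of_hasDerivWithinAt hf' hSI hS, h.1⟩

theorem Witnesses.exists_isTameOn (hI : I.OrdConnected)
    (hf' : ∀ t ∈ I, HasDerivWithinAt f' (f'' t) I t) (hf'' : ContinuousOn f'' I) {K : Set ℝ}
    (hK : Witnesses f'' I K) :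
    ∃ E, ClosedDiscreteIn E I ∧ ∀ x ∈ I \ E, IsTameOn f' f'' (connectedComponentIn (I \ E) x) := by
  obtain ⟨K₁, -, hK₁, hsign₁⟩ := hK.exists_noSignChangeOn hI hf''
  have hK₁' : Witnesses f' I K₁ := ⟨hK₁.1, fun x hx =>
    (hsign₁ x hx).monoOn_of_hasDerivWithinAt hf'
      ((connectedComponentIn_subset _ _).trans sdiff_subset)
      isPreconnected_connectedComponentIn.ordConnected⟩
  obtain ⟨K₂, hK₁K₂, hK₂, hsign₂⟩ :=
    hK₁'.exists_noSignChangeOn hI (HasDerivWithinAt.continuousOn hf')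
  refine ⟨K₂, hK₂.1, fun x hx => ?_⟩
  have hx₁ : x ∈ I \ K₁ := ⟨hx.1, fun h => hx.2 (hK₁K₂ h)⟩
  have hsub := connectedComponentIn_mono x (sdiff_subset_sdiff_right (s := I) hK₁K₂)
  exact ⟨(hK₁.2 x hx₁).mono hsub, (hsign₁ x hx₁).mono hsub, hsign₂ x hx⟩

-- `f'` is constant or injective on the platform, and in the latter case its only possible zero
-- there is the representative.
theorem eq_and_sign_eq_of_subset_platform (hf' : ∀ t ∈ I, HasDerivWithinAt f' (f'' t) I t) {e : ℝ}
    {T : Set ℝ} (hT : T.OrdConnected) (heT : e ∈ T) (hTP : T ⊆ Platform f'' I e)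
    (hrep : platformRep f' (Platform f'' I e) ∉ T) :
    ∀ t ∈ T, f'' t = f'' e ∧ SignType.sign (f' t) = SignType.sign (f' e) := by
  set P := Platform f'' I e
  have hPI : P ⊆ I := fun t ht => (platform_subset ht).1
  have hP : ∀ t ∈ P, f'' t = f'' e := fun t ht => (platform_subset ht).2
  intro t ht
  refine ⟨hP t (hTP ht), ?_⟩
  rcases eq_or_ne (f'' e) 0 with h0 | h0
  · rw [eq_of_hasDerivWithinAt_eq_zero hf' hPI ordConnected_platform
      (fun s hs => (hP s hs).trans h0) (hTP ht) (hTP heT)]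
  have hinj := injOn_of_hasDerivWithinAt_const hf' hPI ordConnected_platform h0 hP
  obtain ⟨hrP, hr0⟩ := platformRep_spec (g := f') ⟨e, hTP heT⟩
  have hne : ∀ s ∈ T, f' s ≠ 0 := fun s hs hs0 =>
    hrep (hinj (hTP hs) hrP (hs0.trans (hr0 s (hTP hs) hs0).symm) ▸ hs)
  exact hT.isPreconnected.sign_eq_of_forall_ne_zero
    ((HasDerivWithinAt.continuousOn hf').mono (hTP.trans hPI)) hne ht heT

theorem Icc_subset_platform_or {E C : Set ℝ} (hEI : E ⊆ I) (hC : C.OrdConnected)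
    (hCE : ∀ y ∈ C, y ∉ platformReps f' f'' I E) {x e z : ℝ} (he : e ∈ E) (hx : x ∈ C)
    (hz : z ∈ C) : Icc x e ⊆ Platform f'' I e ∨ Icc e z ⊆ Platform f'' I e := by
  have hrP := platformRep_mem_platform (g := f') (h := f'') (hEI he)
  have hrC : platformRep f' (Platform f'' I e) ∉ Icc x z := fun h =>
    hCE _ (hC.out hx hz h) ⟨e, he, rfl⟩
  rcases lt_or_ge (platformRep f' (Platform f'' I e)) x with hrx | hxr
  · exact .inl ((Icc_subset_Icc_left hrx.le).trans
      (ordConnected_platform.out hrP (self_mem_platform (hEI he))))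
  · have hzr := lt_of_not_ge fun hrz => hrC ⟨hxr, hrz⟩
    exact .inr ((Icc_subset_Icc_right hzr.le).trans
      (ordConnected_platform.out (self_mem_platform (hEI he)) hrP))

theorem isTameOn_components_diff_platformReps (hf' : ∀ t ∈ I, HasDerivWithinAt f' (f'' t) I t)
    (hf'' : ContinuousOn f'' I) {E : Set ℝ} (hE : ClosedDiscreteIn E I)
    (htame : ∀ x ∈ I \ E, IsTameOn f' f'' (connectedComponentIn (I \ E) x)) :
    ∀ x ∈ I \ platformReps f' f'' I E,
      IsTameOn f' f'' (connectedComponentIn (I \ platformReps f' f'' I E) x) := by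
  intro x hx
  set C := connectedComponentIn (I \ platformReps f' f'' I E) x
  have hC : C.OrdConnected := isPreconnected_connectedComponentIn.ordConnected
  have hCI : C ⊆ I := (connectedComponentIn_subset _ _).trans sdiff_subset
  have hCE : ∀ y ∈ C, y ∉ platformReps f' f'' I E := fun y hy =>
    (connectedComponentIn_subset _ _ hy).2
  refine isTameOn_of_forall_Icc fun a ha b hb hab => ?_
  refine Ioo_induction_of_finite (D := E)
    (P := fun x z => x ∈ C → z ∈ C → IsTameOn f' f'' (Icc x z)) ?_ ?_ hab
    ((hE.finite_inter_Icc (hC.out ha hb |>.trans hCI)).subset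
      fun t ht => ⟨ht.2, Ioo_subset_Icc_self ht.1⟩) ha hb
  · intro x z hxz hD hx hz
    have hIcc : Icc x z ⊆ I := (hC.out hx hz).trans hCI
    have hIoo : Ioo x z ⊆ I \ E := fun t ht =>
      ⟨hIcc (Ioo_subset_Icc_self ht), fun htE => hD.subset ⟨ht, htE⟩⟩
    have hmid : (x + z) / 2 ∈ Ioo x z := ⟨by linarith, by linarith⟩
    have hIooTame := (htame _ (hIoo hmid)).mono
      (isPreconnected_Ioo.subset_connectedComponentIn hmid hIoo)
    rw [← closure_Ioo hxz.ne] at hIcc ⊢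
    exact hIooTame.closure_of_continuousOn ((HasDerivWithinAt.continuousOn hf').mono hIcc)
      (hf''.mono hIcc)
  · intro x e z he heE hxe hez hx hz
    have heC : e ∈ C := hC.out hx hz ⟨he.1.le, he.2.le⟩
    have hflat : ∀ {T}, T ⊆ C → T.OrdConnected → e ∈ T → T ⊆ Platform f'' I e →
        ∀ t ∈ T, f'' t = f'' e ∧ SignType.sign (f' t) = SignType.sign (f' e) :=
      fun hTC hT heT hTP => eq_and_sign_eq_of_subset_platform hf' hT heT hTP fun h =>
        hCE _ (hTC h) ⟨e, heE, rfl⟩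
    refine (hxe hx heC).Icc_union_Icc he.1.le he.2.le (hez heC hz) ?_
    rcases Icc_subset_platform_or hE.1 hC hCE heE hx hz with h | h
    · exact .inl (hflat (hC.out hx heC) ordConnected_Icc (right_mem_Icc.2 he.1.le) h)
    · exact .inr (hflat (hC.out heC hz) ordConnected_Icc (left_mem_Icc.2 he.2.le) h)

end Tame

/-- For a `C²` function `f` with `D²f` piecewise monotone, there is a closed
discrete set `E` witnessing the piecewise monotonicity of `f`, `Df` and `D²f`
simultaneously, with at most one point on each platform of `D²f`. -/
theorem common_witness_C2
    (I : Set ℝ) (hI : I.OrdConnected) (hnt : I.Nontrivial)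
    (f : ℝ → ℝ) (hf : ContDiffOn ℝ 2 f I)
    (h2 : PiecewiseMonotoneOn (iteratedDerivWithin 2 f I) I) :
    ∃ E, Witnesses f I E ∧
      Witnesses (iteratedDerivWithin 1 f I) I E ∧
      Witnesses (iteratedDerivWithin 2 f I) I E ∧
      ∀ p ∈ I, ∀ x ∈ E ∩ Platform (iteratedDerivWithin 2 f I) I p,
        ∀ y ∈ E ∩ Platform (iteratedDerivWithin 2 f I) I p, x = y := by
  obtain ⟨K, hK⟩ := h2
  have hU : UniqueDiffOn ℝ I :=
    uniqueDiffOn_convex hI.convex (hI.convex.nontrivial_iff_nonempty_interior.1 hnt)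
  have hd₁ : ∀ t ∈ I, HasDerivWithinAt f (iteratedDerivWithin 1 f I t) I t := fun t ht => by
    simpa using hf.hasDerivWithinAt_iteratedDerivWithin (m := 0) (by norm_num) hU ht
  have hd₂ : ∀ t ∈ I,
      HasDerivWithinAt (iteratedDerivWithin 1 f I) (iteratedDerivWithin 2 f I t) I t :=
    fun t ht => hf.hasDerivWithinAt_iteratedDerivWithin (m := 1) (by norm_num) hU ht
  have hc₂ := hf.continuousOn_iteratedDerivWithin le_rfl hU
  obtain ⟨E₀, hE₀, htame⟩ := hK.exists_isTameOn hI hd₂ hc₂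
  set E := platformReps (iteratedDerivWithin 1 f I) (iteratedDerivWithin 2 f I) I E₀
  have hE : ClosedDiscreteIn E I := hE₀.platformReps
  have hmono := fun x hx =>
    (isTameOn_components_diff_platformReps hd₂ hc₂ hE₀ htame x hx).monoOn hd₁ hd₂
      ((connectedComponentIn_subset _ _).trans sdiff_subset)
      isPreconnected_connectedComponentIn.ordConnected
  refine ⟨E, ⟨hE, fun x hx => (hmono x hx).1⟩, ⟨hE, fun x hx => (hmono x hx).2.1⟩,
    ⟨hE, fun x hx => (hmono x hx).2.2⟩, fun p _ x hx y hy => ?_⟩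
  rw [eq_platformRep_of_mem_platformReps hE₀.1 hx.1 hx.2,
    eq_platformRep_of_mem_platformReps hE₀.1 hy.1 hy.2]
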